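/- arXiv:1108.2950 — 3 statements merged into one kernel-verified Lean document; each statement's English description precedes it below -/
import Mathlib

section
/- For every even integer q with 2r ≤ q ≤ 4r, every r-regular graph G admits a function f from E(G) to {2, 3, 4} such that for every vertex u of G, the sum of f(uv) over all neighbors v of u equals q. -/
open Finset SimpleGraph

section AuxPetersen

set_option linter.unusedSectionVars false

variable {V : Type*} [Fintype V] [DecidableEq V]


lemma ind_pair (u v u0 v0 : V) (hne : u0 ≠ v0) :
    (if u = u0 ∧ v = v0 then (1:ℕ) else 0) + (if v = u0 ∧ u = v0 then 1 else 0)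
      = (if (u = u0 ∧ v = v0) ∨ (u = v0 ∧ v = u0) then 1 else 0) := by
  by_cases h1 : u = u0 <;> by_cases h2 : v = v0 <;> by_cases h3 : u = v0 <;>
    by_cases h4 : v = u0 <;> simp_all

lemma euler_orient : ∀ (n : ℕ) (m : V → V → ℕ) (a b : V),
    (∑ u, ∑ v, m u v) = n →
    (∀ u v, m u v = m v u) →
    (∀ u, m u u = 0) →
    (∀ u, Even ((∑ v, m u v) + ((if u = a then 1 else 0) + (if u = b then 1 else 0)))) →
    ∃ d : V → V → ℕ,
      (∀ u v, d u v + d v u = m u v) ∧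
      (∀ u, (∑ v, d u v) + (if u = b then 1 else 0)
           = (∑ v, d v u) + (if u = a then 1 else 0)) := by
  intro n
  induction n using Nat.strong_induction_on with
  | _ n IH =>
  intro m a b hn hsym hdiag hpar
  by_cases hzero : ∀ u v, m u v = 0
  · have hab : a = b := by
      by_contra hne
      have := hpar a
      simp [hzero, hne, Nat.even_iff] at this
    subst hab
    refine ⟨fun _ _ => 0, fun u v => by simp [hzero], fun u => by simp⟩
  · push_neg at hzero
    obtain ⟨u0', v0', h01'⟩ := hzero
    -- choose the edge to remove and the new boundary pair
    obtain ⟨u0, v0, a', b', hpos, hid⟩ :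
        ∃ u0 v0 a' b', 0 < m u0 v0 ∧
          ∀ u : V, (if u = u0 then 1 else 0) + (if u = b then 1 else 0) + (if u = a' then 1 else 0)
            = (if u = v0 then 1 else 0) + (if u = a then 1 else 0) + (if u = b' then 1 else 0) := by
      by_cases hab : a = b
      · exact ⟨u0', v0', v0', u0', Nat.pos_of_ne_zero h01',
          fun u => by subst hab; split_ifs <;> omega⟩
      · have hodd : ¬ Even (∑ v, m a v) := by
          have := hpar a
          simp [hab, Nat.even_iff] at this ⊢
          omega
        have hpos : 0 < ∑ v, m a v := by
          rcases Nat.eq_zero_or_pos (∑ v, m a v) with h | h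
          · exact absurd (h ▸ Even.zero) hodd
          · exact h
        obtain ⟨c, -, hc⟩ : ∃ c ∈ (univ : Finset V), 0 < m a c := by
          by_contra h
          push_neg at h
          have : (∑ v, m a v) = 0 := Finset.sum_eq_zero fun v hv => by
            have := h v hv; omega
          omega
        exact ⟨a, c, c, b, hc, fun u => by split_ifs <;> omega⟩
    have hne : u0 ≠ v0 := by
      intro h; rw [h, hdiag] at hpos; omega
    set m' : V → V → ℕ := fun x y =>
      m x y - (if (x = u0 ∧ y = v0) ∨ (x = v0 ∧ y = u0) then 1 else 0) with hm'
    have hptw : ∀ x y, m' x y + (if (x = u0 ∧ y = v0) ∨ (x = v0 ∧ y = u0) then 1 else 0) = m x y := by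
      intro x y
      have hge : (if (x = u0 ∧ y = v0) ∨ (x = v0 ∧ y = u0) then 1 else 0) ≤ m x y := by
        split_ifs with h
        · rcases h with ⟨h1, h2⟩ | ⟨h1, h2⟩ <;> subst h1 <;> subst h2
          · omega
          · rw [hsym]; omega
        · omega
      simp only [hm']
      omega
    have hindsum : ∀ x : V, (∑ v, (if (x = u0 ∧ v = v0) ∨ (x = v0 ∧ v = u0) then 1 else 0 : ℕ))
        = (if x = u0 then 1 else 0) + (if x = v0 then 1 else 0) := by
      intro x
      have key : ∀ v : V, (if (x = u0 ∧ v = v0) ∨ (x = v0 ∧ v = u0) then (1:ℕ) else 0)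
          = (if x = u0 then 1 else 0) * (if v = v0 then 1 else 0)
            + (if x = v0 then 1 else 0) * (if v = u0 then 1 else 0) := by
        intro v
        by_cases h1 : x = u0 <;> by_cases h2 : x = v0 <;> by_cases h3 : v = v0 <;>
          by_cases h4 : v = u0 <;> simp_all
      simp only [key]
      rw [Finset.sum_add_distrib, ← Finset.mul_sum, ← Finset.mul_sum]
      simp [Finset.sum_ite_eq']
    have hdeg : ∀ x : V, (∑ v, m' x v) + ((if x = u0 then 1 else 0) + (if x = v0 then 1 else 0))
        = ∑ v, m x v := by
      intro x
      rw [← hindsum x, ← Finset.sum_add_distrib]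
      exact Finset.sum_congr rfl fun v _ => hptw x v
    have hsym' : ∀ u v, m' u v = m' v u := by
      intro u v
      simp only [hm', hsym u v]
      congr 1
      exact if_congr (by tauto) rfl rfl
    have hdiag' : ∀ u, m' u u = 0 := by
      intro u; simp only [hm', hdiag]; omega
    have htot : (∑ u, ∑ v, m' u v) + 2 = n := by
      rw [← hn]
      have := Finset.sum_congr rfl (fun x (_ : x ∈ (univ : Finset V)) => (hdeg x).symm)
      rw [this, Finset.sum_add_distrib, Finset.sum_add_distrib]
      simp [Finset.sum_ite_eq']
    have hpar' : ∀ u, Even ((∑ v, m' u v) + ((if u = a' then 1 else 0) + (if u = b' then 1 else 0))) := by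
      intro u
      have h1 := hdeg u
      have h2 := hpar u
      have h3 := hid u
      rw [Nat.even_iff] at h2 ⊢
      omega
    obtain ⟨d', hd'1, hd'2⟩ := IH (∑ u, ∑ v, m' u v) (by omega) m' a' b' rfl hsym' hdiag' hpar'
    refine ⟨fun x y => d' x y + (if x = u0 ∧ y = v0 then 1 else 0), ?_, ?_⟩
    · intro u v
      beta_reduce
      have h1 := hd'1 u v
      have h2 := hptw u v
      have := ind_pair u v u0 v0 hne
      omega
    · intro u
      beta_reduce
      have hrow : (∑ v, (d' u v + if u = u0 ∧ v = v0 then (1:ℕ) else 0))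
          = (∑ v, d' u v) + (if u = u0 then 1 else 0) := by
        rw [Finset.sum_add_distrib]
        congr 1
        by_cases h : u = u0 <;> simp [h, Finset.sum_ite_eq']
      have hcol : (∑ v, (d' v u + if v = u0 ∧ u = v0 then (1:ℕ) else 0))
          = (∑ v, d' v u) + (if u = v0 then 1 else 0) := by
        rw [Finset.sum_add_distrib]
        congr 1
        by_cases h : u = v0 <;> simp [h, Finset.sum_ite_eq']
      rw [hrow, hcol]
      have h1 := hd'2 u
      have h3 := hid u
      omega

lemma two_factor (m : V → V → ℕ) (s : ℕ) (hs : 0 < s)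
    (hsym : ∀ u v, m u v = m v u) (hdiag : ∀ u, m u u = 0)
    (hreg : ∀ u, ∑ v, m u v = 2 * s) :
    ∃ F : V → V → ℕ, (∀ u v, F u v = F v u) ∧ (∀ u v, F u v ≤ m u v) ∧
      (∀ u, ∑ v, F u v = 2) := by
  cases isEmpty_or_nonempty V with
  | inl h => exact ⟨fun _ _ => 0, fun u v => rfl, fun u v => Nat.zero_le _,
      fun u => (IsEmpty.false u).elim⟩
  | inr h =>
  obtain ⟨a⟩ := h
  obtain ⟨d, hd1, hd2⟩ := euler_orient (∑ u, ∑ v, m u v) m a a rfl hsym hdiag (fun u => by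
    have := hreg u
    rw [Nat.even_iff]
    split_ifs <;> omega)
  have hbal : ∀ u, (∑ v, d u v) = ∑ v, d v u := fun u => by
    have := hd2 u; omega
  have hsumdeg : ∀ u, (∑ v, d u v) + (∑ v, d v u) = 2 * s := by
    intro u
    rw [← hreg u, ← Finset.sum_add_distrib]
    exact Finset.sum_congr rfl fun v _ => hd1 u v
  have hout : ∀ u, (∑ v, d u v) = s := fun u => by
    have h1 := hbal u; have h2 := hsumdeg u; omega
  have hin : ∀ u, (∑ v, d v u) = s := fun u => by
    have h1 := hbal u; have h2 := hsumdeg u; omega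
  set t : V → Finset V := fun u => univ.filter (fun v => 0 < d u v) with ht
  have hall : ∀ S : Finset V, S.card ≤ (S.biUnion t).card := by
    intro S
    have key : s * S.card ≤ s * (S.biUnion t).card := by
      calc s * S.card = ∑ _u ∈ S, s := by rw [Finset.sum_const, smul_eq_mul, mul_comm]
        _ = ∑ u ∈ S, ∑ v, d u v := Finset.sum_congr rfl fun u _ => (hout u).symm
        _ = ∑ u ∈ S, ∑ v ∈ t u, d u v := by
            refine Finset.sum_congr rfl fun u _ => (Finset.sum_subset (filter_subset _ _) ?_).symm
            intro v _ hv
            simp only [ht, mem_filter, mem_univ, true_and, not_lt] at hv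
            omega
        _ ≤ ∑ u ∈ S, ∑ v ∈ S.biUnion t, d u v := Finset.sum_le_sum fun u hu =>
            Finset.sum_le_sum_of_subset (fun v hv => Finset.mem_biUnion.mpr ⟨u, hu, hv⟩)
        _ = ∑ v ∈ S.biUnion t, ∑ u ∈ S, d u v := Finset.sum_comm
        _ ≤ ∑ v ∈ S.biUnion t, ∑ u, d u v := Finset.sum_le_sum fun v _ =>
            Finset.sum_le_sum_of_subset (subset_univ S)
        _ = ∑ _v ∈ S.biUnion t, s := Finset.sum_congr rfl fun v _ => hin v
        _ = s * (S.biUnion t).card := by rw [Finset.sum_const, smul_eq_mul, mul_comm]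
    exact Nat.le_of_mul_le_mul_left key hs
  obtain ⟨f, hfinj, hft⟩ := (Finset.all_card_le_biUnion_card_iff_exists_injective t).mp hall
  have hfd : ∀ u, 0 < d u (f u) := fun u => by
    have := hft u
    simpa only [ht, mem_filter, mem_univ, true_and] using this
  have hfbij : Function.Bijective f := Finite.injective_iff_bijective.mp hfinj
  let e := Equiv.ofBijective f hfbij
  refine ⟨fun u v => (if f u = v then 1 else 0) + (if f v = u then 1 else 0),
    fun u v => add_comm _ _, ?_, ?_⟩
  · intro u v
    have hm := hd1 u v
    by_cases h1 : f u = v <;> by_cases h2 : f v = u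
    · have h3 := hfd u; have h4 := hfd v
      rw [h1] at h3; rw [h2] at h4
      simp only [h1, h2, if_true]
      omega
    · have h3 := hfd u; rw [h1] at h3
      simp only [h1, h2, if_true, if_false]
      omega
    · have h4 := hfd v; rw [h2] at h4
      simp only [h1, h2, if_true, if_false]
      omega
    · simp [h1, h2]
  · intro u
    rw [Finset.sum_add_distrib]
    have hA : (∑ v, if f u = v then (1:ℕ) else 0) = 1 := by
      simp [Finset.sum_ite_eq]
    have hB : (∑ v, if f v = u then (1:ℕ) else 0) = 1 := by
      have hiff : ∀ v : V, (f v = u) ↔ (v = e.symm u) := by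
        intro v
        rw [Equiv.eq_symm_apply]
        exact Iff.rfl
      simp only [hiff]
      simp [Finset.sum_ite_eq']
    rw [hA, hB]

lemma multi_factor : ∀ (k s : ℕ) (m : V → V → ℕ), k ≤ s →
    (∀ u v, m u v = m v u) → (∀ u, m u u = 0) → (∀ u, ∑ v, m u v = 2 * s) →
    ∃ h : V → V → ℕ, (∀ u v, h u v = h v u) ∧ (∀ u v, h u v ≤ m u v) ∧
      (∀ u, ∑ v, h u v = 2 * k) := by
  intro k
  induction k with
  | zero => exact fun s m _ _ _ _ => ⟨fun _ _ => 0, fun _ _ => rfl, fun _ _ => Nat.zero_le _,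
      fun u => by simp⟩
  | succ k IHk =>
  intro s m hk hsym hdiag hregm
  obtain ⟨F, hF1, hF2, hF3⟩ := two_factor m s (by omega) hsym hdiag hregm
  set m' : V → V → ℕ := fun u v => m u v - F u v with hm'
  have hptw : ∀ u v, m' u v + F u v = m u v := fun u v => by
    simp only [hm']; have := hF2 u v; omega
  have hs' : 1 ≤ s := by omega
  obtain ⟨h', h'1, h'2, h'3⟩ := IHk (s - 1) m' (by omega)
    (fun u v => by simp only [hm', hsym u v, hF1 u v])
    (fun u => by simp only [hm', hdiag, Nat.zero_sub])
    (fun u => by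
      have : (∑ v, m' u v) + (∑ v, F u v) = ∑ v, m u v := by
        rw [← Finset.sum_add_distrib]; exact Finset.sum_congr rfl fun v _ => hptw u v
      have h1 := hF3 u; have h2 := hregm u
      omega)
  refine ⟨fun u v => h' u v + F u v, fun u v => by beta_reduce; rw [h'1 u v, hF1 u v], ?_, ?_⟩
  · intro u v
    beta_reduce
    have := h'2 u v; have := hptw u v
    omega
  · intro u
    beta_reduce
    rw [Finset.sum_add_distrib, h'3 u, hF3 u]
    ring


end AuxPetersen

/-- For every even integer `q` with `2r ≤ q ≤ 4r`, every `r`-regular graph `G` admits a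
function `f` from its edges to `{2, 3, 4}` such that for every vertex `u`, the sum of the
values of `f` over the edges incident with `u` equals `q`. -/
theorem stmt_0 {V : Type*} [Fintype V] [DecidableEq V] (G : SimpleGraph V)
    [DecidableRel G.Adj] (r q : ℕ) (hreg : G.IsRegularOfDegree r)
    (hq : Even q) (hq1 : 2 * r ≤ q) (hq2 : q ≤ 4 * r) :
    ∃ f : Sym2 V → ℕ,
      (∀ e ∈ G.edgeFinset, f e = 2 ∨ f e = 3 ∨ f e = 4) ∧
      (∀ u : V, ∑ e ∈ G.incidenceFinset u, f e = q) := by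
  have hq0 : q % 2 = 0 := Nat.even_iff.mp hq
  set k : ℕ := q / 2 - r with hkdef
  have hqeq : q = 2 * r + 2 * k := by omega
  have hkr : k ≤ r := by omega
  set m : V → V → ℕ := fun u v => 2 * (if G.Adj u v then 1 else 0) with hm
  have hmsym : ∀ u v, m u v = m v u := by
    intro u v
    simp only [hm]
    congr 1
    exact if_congr (G.adj_comm u v) rfl rfl
  have hmdiag : ∀ u, m u u = 0 := fun u => by simp [hm]
  have hmreg : ∀ u, ∑ v, m u v = 2 * r := by
    intro u
    simp only [hm]
    rw [← Finset.mul_sum, Finset.sum_boole]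
    have : (univ.filter (fun v => G.Adj u v)) = G.neighborFinset u := by
      rw [SimpleGraph.neighborFinset_eq_filter]
    rw [this]
    have : (G.neighborFinset u).card = r := hreg u
    simp [this]
  obtain ⟨h, hh1, hh2, hh3⟩ := multi_factor k r m hkr hmsym hmdiag hmreg
  refine ⟨Sym2.lift ⟨fun x y => 2 + h x y, fun x y => by simp only [hh1 x y]⟩, ?_, ?_⟩
  · intro e he
    induction e with
    | _ x y =>
    have hadj : G.Adj x y := by rwa [mem_edgeFinset, mem_edgeSet] at he
    have hxy := hh2 x y
    simp only [hm, hadj, if_true, mul_one] at hxy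
    rw [Sym2.lift_mk]
    simp only []
    omega
  · intro u
    have himg : G.incidenceFinset u = (G.neighborFinset u).image (fun v => s(u, v)) := by
      ext e
      simp only [mem_incidenceFinset, mem_image, mem_neighborFinset]
      constructor
      · intro he
        obtain ⟨heE, hue⟩ := he
        induction e with
        | _ x y =>
        have hadj : G.Adj x y := heE
        rcases Sym2.mem_iff.mp hue with rfl | rfl
        · exact ⟨y, hadj, rfl⟩
        · exact ⟨x, hadj.symm, Sym2.eq_swap⟩
      · rintro ⟨v, hadj, rfl⟩
        exact (G.mem_incidenceSet u v).mpr hadj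
    rw [himg, Finset.sum_image (fun x _ y _ hxy => Sym2.congr_right.mp hxy)]
    have hlift : ∀ v ∈ G.neighborFinset u,
        Sym2.lift ⟨fun x y => 2 + h x y, fun x y => by simp only [hh1 x y]⟩ s(u, v)
          = 2 + h u v := fun v _ => Sym2.lift_mk _ u v
    rw [Finset.sum_congr rfl hlift, Finset.sum_add_distrib, Finset.sum_const]
    have hcard : (G.neighborFinset u).card = r := hreg u
    have hext : (∑ v ∈ G.neighborFinset u, h u v) = ∑ v, h u v := by
      refine Finset.sum_subset (subset_univ _) ?_
      intro v _ hv
      have hnadj : ¬ G.Adj u v := by rwa [mem_neighborFinset] at hv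
      have := hh2 u v
      simp only [hm, hnadj, if_false, mul_zero] at this
      omega
    rw [hext, hh3 u, hcard]
    simp only [smul_eq_mul]
    omega
end

section
/- Every 2k-regular multigraph admits a 2-factorization, i.e., its edge set can be partitioned into k spanning subgraphs each of which is 2-regular. -/
/-!
Petersen's argument. First orient `G` so that every vertex has in- and out-degree `k`: give every
vertex `k` slots and place each edge in a slot at one of its endpoints, which is possible by Hall's
theorem because the edge-slot incidence relation is `2k`-regular on both sides; an edge points away
from the vertex owning its slot. The orientation is a `k`-regular bipartite relation between two
copies of `V`, so Hall's theorem splits it into `k` permutations `σᵢ`. Since the orientation is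
antisymmetric, no `σᵢ` has fixed points or `2`-cycles, so the edges `{v, σᵢ v}` form a `2`-factor.
-/

open Finset SimpleGraph Function

open scoped Classical

section RegularRelation

variable {α β : Type*} [Fintype α] [Fintype β]

theorem exists_equiv_of_forall_card_eq {r : α → β → Prop} [DecidableRel r] {k : ℕ} (hk : 0 < k)
    (hout : ∀ a, #{b | r a b} = k) (hin : ∀ b, #{a | r a b} = k) :
    ∃ e : α ≃ β, ∀ a, r a (e a) := by
  have hall (s : Finset α) : #s ≤ #(s.biUnion fun a => {b | r a b}) := by
    refine Nat.le_of_mul_le_mul_right (card_mul_le_card_mul r (m := k) (n := k) ?_ ?_) hk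
    · intro a ha
      rw [← hout a]
      exact card_le_card fun b hb => by
        simp only [bipartiteAbove, mem_filter, mem_biUnion, mem_univ, true_and] at hb ⊢
        exact ⟨⟨a, ha, hb⟩, hb⟩
    · exact fun b _ => (hin b).symm ▸ card_le_card (filter_subset_filter _ (subset_univ s))
  obtain ⟨f, hinj, hf⟩ := (all_card_le_biUnion_card_iff_exists_injective _).mp hall
  have hcard : Fintype.card α = Fintype.card β := Nat.eq_of_mul_eq_mul_right hk <|
    card_mul_eq_card_mul r (fun a _ => hout a) (fun b _ => hin b)
  exact ⟨Equiv.ofBijective f ((Fintype.bijective_iff_injective_and_card f).mpr ⟨hinj, hcard⟩),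
    fun a => (mem_filter.mp (hf a)).2⟩

theorem exists_equiv_family_of_forall_card_eq {r : α → β → Prop} [DecidableRel r] {k : ℕ}
    (hout : ∀ a, #{b | r a b} = k) (hin : ∀ b, #{a | r a b} = k) :
    ∃ e : Fin k → α ≃ β, (∀ i a, r a (e i a)) ∧ (∀ a, Injective fun i => e i a) ∧
      ∀ a b, r a b → ∃ i, e i a = b := by
  induction k generalizing r with
  | zero =>
    refine ⟨Fin.elim0, fun i => i.elim0, fun _ => injective_of_subsingleton _, fun a b hab => ?_⟩
    exact absurd hab (filter_eq_empty_iff.mp (card_eq_zero.mp (hout a)) (mem_univ b))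
  | succ k ih =>
    obtain ⟨g, hg⟩ := exists_equiv_of_forall_card_eq k.succ_pos hout hin
    obtain ⟨e, her, heinj, hecover⟩ := ih (r := fun a b => r a b ∧ g a ≠ b)
      (fun a => by
        convert (card_erase_of_mem (s := {b | r a b}) (by simpa using hg a)).trans
          (by rw [hout a, Nat.add_sub_cancel]) using 2
        ext; simp [ne_comm, and_comm])
      (fun b => by
        convert (card_erase_of_mem (s := {a | r a b}) (a := g.symm b) (by simpa using hg (g.symm b))).trans
          (by rw [hin, Nat.add_sub_cancel]) using 2
        ext; simp [g.eq_symm_apply, and_comm])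
    refine ⟨Fin.cons g e, Fin.cases hg fun i a => (her i a).1, fun a => ?_, fun a b hab => ?_⟩
    · have : (fun i => (Fin.cons g e : Fin (k + 1) → α ≃ β) i a) = Fin.cons (g a) fun i => e i a :=
        funext (Fin.cases rfl fun _ => rfl)
      rw [this, Fin.cons_injective_iff]
      exact ⟨fun ⟨i, hi⟩ => (her i a).2 hi.symm, heinj a⟩
    · by_cases hgab : g a = b
      · exact ⟨0, hgab⟩
      · obtain ⟨i, hi⟩ := hecover a b ⟨hab, hgab⟩
        exact ⟨i.succ, hi⟩

end RegularRelation

namespace SimpleGraph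

variable {V : Type*}

structure IsOrientation (G : SimpleGraph V) (O : V → V → Prop) : Prop where
  adj_iff : ∀ v w, G.Adj v w ↔ O v w ∨ O w v
  asymm : ∀ v w, O v w → ¬O w v

theorem isRegularOfDegree_two_fromRel_perm (σ : Equiv.Perm V) (hσ : ∀ v, σ (σ v) ≠ v)
    [(fromRel fun v w => σ v = w).LocallyFinite] :
    (fromRel fun v w => σ v = w).IsRegularOfDegree 2 := by
  intro v
  have hne : σ v ≠ σ.symm v := fun h => hσ v (by rw [h, Equiv.apply_symm_apply])
  have h₁ : σ v ≠ v := fun h => hσ v (by rw [h, h])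
  have h₂ : σ.symm v ≠ v := fun h => h₁ <| by
    calc σ v = σ (σ.symm v) := by rw [h]
      _ = v := σ.apply_symm_apply v
  rw [← card_neighborFinset_eq_degree, ← card_pair hne]
  congr 1
  ext w
  simp only [mem_neighborFinset, fromRel_adj, mem_insert, mem_singleton]
  constructor
  · rintro ⟨-, h | rfl⟩
    · exact Or.inl h.symm
    · exact Or.inr (σ.symm_apply_apply w).symm
  · rintro (rfl | rfl)
    · exact ⟨h₁.symm, Or.inl rfl⟩
    · exact ⟨h₂.symm, Or.inr (σ.apply_symm_apply v)⟩

namespace IsOrientation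

variable {G : SimpleGraph V} {O : V → V → Prop} (hO : G.IsOrientation O)
include hO

theorem adj {v w : V} (h : O v w) : G.Adj v w :=
  (hO.adj_iff v w).2 (Or.inl h)

variable {σ : Equiv.Perm V} (hσ : ∀ v, O v (σ v))
include hσ

theorem fromRel_le : (fromRel fun v w => σ v = w) ≤ G := by
  rintro v w ⟨-, rfl | rfl⟩
  · exact hO.adj (hσ v)
  · exact (hO.adj (hσ w)).symm

theorem isRegularOfDegree_two_fromRel [(fromRel fun v w => σ v = w).LocallyFinite] :
    (fromRel fun v w => σ v = w).IsRegularOfDegree 2 :=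
  isRegularOfDegree_two_fromRel_perm σ fun v h => hO.asymm _ _ (hσ v) (by simpa only [h] using hσ (σ v))

theorem fromRel_adj_iff {v w : V} (h : O v w) : (fromRel fun v w => σ v = w).Adj v w ↔ σ v = w := by
  refine ⟨fun hσvw => ((fromRel_adj _ _ _).1 hσvw).2.resolve_right fun h' => ?_, fun h' => ?_⟩
  · exact hO.asymm _ _ h (h' ▸ hσ w)
  · exact (fromRel_adj _ _ _).2 ⟨(hO.adj h).ne, Or.inl h'⟩

end IsOrientation

variable {k : ℕ} {G : SimpleGraph V} (φ : V × Fin k ≃ G.edgeSet)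

def slotOrientation (v w : V) : Prop := ∃ j, (φ (v, j) : Sym2 V) = s(v, w)

variable {φ} (hφ : ∀ x, x.1 ∈ (φ x : Sym2 V))
include hφ

theorem isOrientation_slotOrientation : G.IsOrientation (slotOrientation φ) := by
  refine ⟨fun v w => ⟨fun h => ?_, ?_⟩, ?_⟩
  · obtain ⟨⟨u, j⟩, hx⟩ := φ.surjective ⟨s(v, w), h⟩
    have hu := hφ (u, j)
    rw [hx, Sym2.mem_iff] at hu
    rcases hu with rfl | rfl
    · exact Or.inl ⟨j, congrArg Subtype.val hx⟩
    · exact Or.inr ⟨j, (congrArg Subtype.val hx).trans Sym2.eq_swap⟩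
  · rintro (⟨j, hj⟩ | ⟨j, hj⟩)
    · simpa [hj] using (φ (v, j)).2
    · simpa [hj, adj_comm] using (φ (w, j)).2
  · rintro v w ⟨j, hj⟩ ⟨j', hj'⟩
    have hvw : G.Adj v w := by simpa [hj] using (φ (v, j)).2
    have : φ (v, j) = φ (w, j') := Subtype.ext (by rw [hj, hj', Sym2.eq_swap])
    exact hvw.ne (congrArg Prod.fst (φ.injective this))

variable [Fintype V]

theorem card_slotOrientation (v : V) : #{w | slotOrientation φ v w} = k := by
  let head (j : Fin k) : V := Sym2.Mem.other (hφ (v, j))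
  have hφ_eq (j : Fin k) : (φ (v, j) : Sym2 V) = s(v, head j) := (Sym2.other_spec (hφ (v, j))).symm
  have hinj : Injective head := fun j j' h => by
    have : φ (v, j) = φ (v, j') := Subtype.ext (by rw [hφ_eq, hφ_eq, h])
    exact congrArg Prod.snd (φ.injective this)
  suffices ({w | slotOrientation φ v w} : Finset V) = univ.image head by
    rw [this, card_image_of_injective univ hinj, card_fin]
  ext w
  simp only [slotOrientation, mem_filter, mem_univ, true_and, mem_image, hφ_eq, Sym2.congr_right]

omit hφ

theorem IsOrientation.card_in_add_card_out {O : V → V → Prop} [DecidableRel O]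
    (hO : G.IsOrientation O) (v : V) : #{u | O u v} + #{w | O v w} = G.degree v := by
  rw [← card_neighborFinset_eq_degree, ← card_union_of_disjoint
    (disjoint_filter.mpr fun w _ h h' => hO.asymm _ _ h h')]
  congr 1
  ext w
  simp [hO.adj_iff, or_comm]

theorem card_filter_mem_edgeSet_eq_degree (v : V) :
    #{e : G.edgeSet | v ∈ (e : Sym2 V)} = G.degree v := by
  rw [← card_incidenceFinset_eq_degree, ← card_map (Embedding.subtype _)]
  congr 1
  ext e
  simp [incidenceSet, and_comm]

theorem IsRegularOfDegree.exists_equiv_prod_fin_edgeSet (hk : 0 < k)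
    (hreg : G.IsRegularOfDegree (2 * k)) :
    ∃ φ : V × Fin k ≃ G.edgeSet, ∀ x, x.1 ∈ (φ x : Sym2 V) := by
  refine exists_equiv_of_forall_card_eq
    (r := fun (x : V × Fin k) (e : G.edgeSet) => x.1 ∈ (e : Sym2 V)) (by omega : 0 < 2 * k)
    (fun x => (card_filter_mem_edgeSet_eq_degree x.1).trans (hreg x.1)) fun ⟨e, he⟩ => ?_
  induction e using Sym2.ind with
  | _ v w =>
    have : ({x : V × Fin k | x.1 ∈ s(v, w)} : Finset _) = {v, w} ×ˢ univ := by ext; simp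
    rw [this, card_product, card_pair (G.ne_of_adj he), card_univ, Fintype.card_fin]

theorem IsRegularOfDegree.exists_isOrientation (hreg : G.IsRegularOfDegree (2 * k)) :
    ∃ O, G.IsOrientation O ∧ ∀ v, #{w | O v w} = k ∧ #{u | O u v} = k := by
  obtain rfl | hk := k.eq_zero_or_pos
  · refine ⟨fun _ _ => False, ⟨fun v w => ?_, fun _ _ h => h.elim⟩, fun v => by simp⟩
    simpa using fun h : G.Adj v w => (G.degree_pos_iff_exists_adj v).2 ⟨w, h⟩ |>.ne' (hreg v)
  obtain ⟨φ, hφ⟩ := hreg.exists_equiv_prod_fin_edgeSet hk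
  have hO := isOrientation_slotOrientation hφ
  refine ⟨_, hO, fun v => ⟨card_slotOrientation hφ v, ?_⟩⟩
  have := hO.card_in_add_card_out v
  rw [card_slotOrientation hφ, hreg v] at this
  omega

end SimpleGraph

open scoped Classical in
/-- Every `2k`-regular graph admits a 2-factorization: a family of `k` spanning 2-regular
subgraphs that partition the edge set. -/
theorem stmt_1 {V : Type*} [Fintype V] (G : SimpleGraph V) (k : ℕ)
    (hreg : G.IsRegularOfDegree (2 * k)) :
    ∃ F : Fin k → SimpleGraph V,
      (∀ i, F i ≤ G ∧ (F i).IsRegularOfDegree 2) ∧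
      (∀ e ∈ G.edgeSet, ∃! i, e ∈ (F i).edgeSet) := by
  obtain ⟨O, hO, hdeg⟩ := hreg.exists_isOrientation
  obtain ⟨σ, hσO, hσinj, hσcover⟩ :=
    exists_equiv_family_of_forall_card_eq (fun v => (hdeg v).1) (fun v => (hdeg v).2)
  have hunique {v w} (h : O v w) : ∃! i, (fromRel fun v w => σ i v = w).Adj v w := by
    obtain ⟨i, hi⟩ := hσcover v w h
    refine ⟨i, (hO.fromRel_adj_iff (hσO i) h).2 hi, fun j hj => hσinj v ?_⟩
    exact ((hO.fromRel_adj_iff (hσO j) h).1 hj).trans hi.symm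
  refine ⟨fun i => fromRel fun v w => σ i v = w, fun i => ⟨hO.fromRel_le (hσO i), ?_⟩, ?_⟩
  · convert hO.isRegularOfDegree_two_fromRel (hσO i)
  · intro e he
    induction e using Sym2.ind with
    | _ v w =>
      rcases (hO.adj_iff v w).1 he with h | h
      · exact hunique h
      · simpa only [mem_edgeSet, adj_comm] using hunique h
end

section
/- If r is a positive integer divisible by 3 (and r ≥ 3), then every r-regular graph admits a zero-sum 5-flow. -/
open Finset SimpleGraph

/-!
Write `r = 3s`. The adjacency matrix of `G` has all row and column sums `r`; by Hall's theorem
such an `ℕ`-matrix dominates a permutation matrix, so peeling off `r - s` of them leaves a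
`0/1`-matrix `Y` supported on the edges with all line sums `s` (an `s`-factor of the bipartite
double cover of `G`). Then `f(uw) = 2 - 3 (Y u w + Y w u)` takes values in `{2, -1, -4}`, and its
sum around `v` is `2r - 3 (s + s) = 0`.
-/

theorem exists_injective_forall_ne_zero_of_le_sum_of_sum_le {ι κ : Type*} [Fintype ι] [Fintype κ]
    [DecidableEq κ] (B : ι → κ → ℕ) {k : ℕ} (hk : k ≠ 0)
    (hrow : ∀ i, k ≤ ∑ j, B i j) (hcol : ∀ j, ∑ i, B i j ≤ k) :
    ∃ σ : ι → κ, Function.Injective σ ∧ ∀ i, B i (σ i) ≠ 0 := by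
  let support (i : ι) : Finset κ := {j | B i j ≠ 0}
  suffices hall : ∀ s : Finset ι, #s ≤ #(s.biUnion support) by
    obtain ⟨σ, hσ, hσB⟩ := (all_card_le_biUnion_card_iff_exists_injective support).1 hall
    exact ⟨σ, hσ, fun i => (mem_filter.1 (hσB i)).2⟩
  intro s
  refine le_of_mul_le_mul_left ?_ (Nat.pos_of_ne_zero hk)
  calc k * #s ≤ ∑ i ∈ s, ∑ j, B i j := by
        rw [mul_comm, ← smul_eq_mul, ← sum_const]; exact sum_le_sum fun i _ => hrow i
    _ = ∑ j ∈ s.biUnion support, ∑ i ∈ s, B i j := by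
        rw [sum_comm]
        refine (sum_subset (subset_univ _) fun j _ hj => sum_eq_zero fun i hi => ?_).symm
        by_contra h
        exact hj (mem_biUnion.2 ⟨i, hi, mem_filter.2 ⟨mem_univ _, h⟩⟩)
    _ ≤ ∑ j ∈ s.biUnion support, ∑ i, B i j :=
        sum_le_sum fun j _ => sum_le_sum_of_subset (subset_univ _)
    _ ≤ k * #(s.biUnion support) := by
        rw [mul_comm, ← smul_eq_mul, ← sum_const]; exact sum_le_sum fun j _ => hcol j

section SquareMatrix

variable {n : Type*} [Fintype n] [DecidableEq n]

theorem exists_le_sum_eq_of_sum_eq_succ (B : n → n → ℕ) {k : ℕ}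
    (hrow : ∀ i, ∑ j, B i j = k + 1) (hcol : ∀ j, ∑ i, B i j = k + 1) :
    ∃ B' : n → n → ℕ, (∀ i j, B' i j ≤ B i j) ∧
      (∀ i, ∑ j, B' i j = k) ∧ (∀ j, ∑ i, B' i j = k) := by
  obtain ⟨σ, hσ, hσB⟩ := exists_injective_forall_ne_zero_of_le_sum_of_sum_le B k.succ_ne_zero
    (fun i => (hrow i).ge) (fun j => (hcol j).le)
  let e := Equiv.ofBijective σ (Finite.injective_iff_bijective.1 hσ)
  let P (i j : n) : ℕ := if e i = j then 1 else 0
  have hPB : ∀ i j, P i j ≤ B i j := by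
    intro i j
    by_cases h : e i = j
    · simpa [P, ← h, e, Nat.one_le_iff_ne_zero] using hσB i
    · simp [P, h]
  refine ⟨fun i j => B i j - P i j, fun i j => Nat.sub_le _ _, fun i => ?_, fun j => ?_⟩
  · rw [sum_tsub_distrib _ fun j _ => hPB i j, hrow]
    simp [P]
  · rw [sum_tsub_distrib _ fun i _ => hPB i j, hcol]
    simp [P, ← Equiv.eq_symm_apply]

theorem exists_le_sum_eq_of_sum_eq (B : n → n → ℕ) {k s : ℕ} (hs : s ≤ k)
    (hrow : ∀ i, ∑ j, B i j = k) (hcol : ∀ j, ∑ i, B i j = k) :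
    ∃ Y : n → n → ℕ, (∀ i j, Y i j ≤ B i j) ∧
      (∀ i, ∑ j, Y i j = s) ∧ (∀ j, ∑ i, Y i j = s) := by
  induction k, hs using Nat.le_induction generalizing B with
  | base => exact ⟨B, fun _ _ => le_rfl, hrow, hcol⟩
  | succ k _ ih =>
    obtain ⟨B', hB'B, hrow', hcol'⟩ := exists_le_sum_eq_of_sum_eq_succ B hrow hcol
    obtain ⟨Y, hYB', hYrow, hYcol⟩ := ih B' hrow' hcol'
    exact ⟨Y, fun i j => (hYB' i j).trans (hB'B i j), hYrow, hYcol⟩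

end SquareMatrix

namespace SimpleGraph

variable {V : Type*} [Fintype V] {G : SimpleGraph V} [DecidableRel G.Adj]

theorem sum_incidenceFinset_eq_sum_neighborFinset [DecidableEq V] {M : Type*}
    [AddCommMonoid M] (f : Sym2 V → M) (v : V) :
    ∑ e ∈ G.incidenceFinset v, f e = ∑ u ∈ G.neighborFinset v, f s(v, u) := by
  rw [← sum_image fun _ _ _ _ h => Sym2.congr_right.1 h]
  congr 1
  ext ⟨a, b⟩
  simp only [mem_incidenceFinset, mk'_mem_incidenceSet_iff, mem_image, mem_neighborFinset]
  grind [Sym2.eq_iff, G.adj_comm]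

theorem IsRegularOfDegree.exists_doubleCover_factor {r s : ℕ} (hreg : G.IsRegularOfDegree r)
    (hs : s ≤ r) : ∃ Y : V → V → ℕ, (∀ u w, Y u w ≤ 1) ∧
      (∀ v, ∑ u ∈ G.neighborFinset v, Y v u = s) ∧ (∀ v, ∑ u ∈ G.neighborFinset v, Y u v = s) := by
  classical
  have hrow : ∀ v, ∑ u, G.adjMatrix ℕ v u = r := fun v => by
    simp [adjMatrix_apply, ← neighborFinset_eq_filter, hreg v]
  obtain ⟨Y, hYA, hYrow, hYcol⟩ := exists_le_sum_eq_of_sum_eq (G.adjMatrix ℕ) hs hrow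
    (fun v => by simpa [adjMatrix_apply, G.adj_comm] using hrow v)
  have hY0 : ∀ u w, ¬G.Adj u w → Y u w = 0 := fun u w h =>
    Nat.eq_zero_of_le_zero (by simpa [adjMatrix_apply, h] using hYA u w)
  refine ⟨Y, fun u w => (hYA u w).trans ?_, fun v => ?_, fun v => ?_⟩
  · simp only [adjMatrix_apply]; split <;> omega
  · rw [← hYrow v]
    exact sum_subset (subset_univ _) fun u _ hu => hY0 v u (by simpa using hu)
  · rw [← hYcol v]
    exact sum_subset (subset_univ _) fun u _ hu => hY0 u v (by simpa [G.adj_comm] using hu)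

end SimpleGraph

theorem stmt_6_general {V : Type*} [Fintype V] [DecidableEq V] (G : SimpleGraph V)
    [DecidableRel G.Adj] (r : ℕ) (hdvd : 3 ∣ r)
    (hreg : G.IsRegularOfDegree r) :
    ∃ f : Sym2 V → ℤ,
      (∀ e ∈ G.edgeFinset, f e ≠ 0 ∧ (f e).natAbs ≤ 4) ∧
      (∀ v : V, ∑ e ∈ G.incidenceFinset v, f e = 0) := by
  obtain ⟨s, rfl⟩ := hdvd
  obtain ⟨Y, hY, hrow, hcol⟩ := hreg.exists_doubleCover_factor (s := s) (by omega)
  refine ⟨Sym2.lift ⟨fun u w => 2 - 3 * ((Y u w : ℤ) + Y w u), fun _ _ => by ring⟩, ?_, ?_⟩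
  · rintro ⟨u, w⟩ -
    have := hY u w
    have := hY w u
    simp only [Sym2.lift_mk]
    omega
  · intro v
    rw [sum_incidenceFinset_eq_sum_neighborFinset]
    simp only [Sym2.lift_mk, sum_sub_distrib, sum_const, card_neighborFinset_eq_degree, hreg v,
      ← mul_sum, sum_add_distrib]
    push_cast [← Nat.cast_sum, hrow, hcol]
    ring

/-- If `r ≥ 3` is divisible by 3, then every `r`-regular graph admits a zero-sum 5-flow. -/
theorem stmt_6 {V : Type*} [Fintype V] [DecidableEq V] (G : SimpleGraph V)
    [DecidableRel G.Adj] (r : ℕ) (hdvd : 3 ∣ r) (hr : 3 ≤ r)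
    (hreg : G.IsRegularOfDegree r) :
    ∃ f : Sym2 V → ℤ,
      (∀ e ∈ G.edgeFinset, f e ≠ 0 ∧ (f e).natAbs ≤ 4) ∧
      (∀ v : V, ∑ e ∈ G.incidenceFinset v, f e = 0) :=
  stmt_6_general G r hdvd hreg
end
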